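/- Let F be a field, η ∈ M₂(F) with irreducible characteristic polynomial, β₁ = [[η, I],[0, η]] ∈ M₄(F), and β₂ = diag(η, η). If g ∈ GL₄(F) satisfies g⁻¹ β₁ g = [[η, B],[0, η]] for some B ∈ M₂(F), then g centralizes β₂ implies g is block upper-triangular. More precisely: if g lies in the centralizer of β₂ in GL₄(F) (identified with GL₂(K), K = F[η]) and g⁻¹ β₁ g is block upper-triangular of the form [[η, B],[0, η]], then g is block upper-triangular in M₄(F). -/

import Mathlib

open Matrix

/-
Write `g = [[p, q], [r, s]]` in blocks.  The upper-left block of `β₁ g = g [[η, B], [0, η]]`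
reads `η p + r = p η`, while commuting with `β₂ = diag(η, η)` gives `p η = η p`; hence `r = 0`.
-/

theorem Matrix.toBlocks₂₁_eq_zero_of_conj_of_commute {n R : Type*} [Fintype n] [DecidableEq n]
    [Ring R] {a b d : Matrix n n R} (P : Matrix (n ⊕ n) (n ⊕ n) R)
    (hconj : fromBlocks a 1 0 d * P = P * fromBlocks a b 0 d)
    (hcomm : Commute P (fromBlocks a 0 0 d)) :
    P.toBlocks₂₁ = 0 := by
  have hcomm' := hcomm.eq
  rw [← fromBlocks_toBlocks P, fromBlocks_multiply, fromBlocks_multiply] at hconj hcomm'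
  have h₁ := congrArg toBlocks₁₁ hconj
  have h₂ := congrArg toBlocks₁₁ hcomm'
  simp only [toBlocks_fromBlocks₁₁, Matrix.mul_zero, Matrix.zero_mul, Matrix.one_mul,
    add_zero, zero_add] at h₁ h₂
  rw [h₂] at h₁
  simpa using h₁

theorem stmt6_general (F : Type*) [Field F]
    (η : Matrix (Fin 2) (Fin 2) F)
    (β₁ β₂ : Matrix (Fin 4) (Fin 4) F)
    (hβ₁ : β₁ = Matrix.reindex finSumFinEquiv finSumFinEquiv (Matrix.fromBlocks η 1 0 η))
    (hβ₂ : β₂ = Matrix.reindex finSumFinEquiv finSumFinEquiv (Matrix.fromBlocks η 0 0 η))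
    (g : GL (Fin 4) F)
    (hcent : (g : Matrix (Fin 4) (Fin 4) F) * β₂ = β₂ * (g : Matrix (Fin 4) (Fin 4) F))
    (B : Matrix (Fin 2) (Fin 2) F)
    (hconj : (g⁻¹ : GL (Fin 4) F) * β₁ * (g : Matrix (Fin 4) (Fin 4) F) =
      Matrix.reindex finSumFinEquiv finSumFinEquiv (Matrix.fromBlocks η B 0 η)) :
    ((Matrix.reindex (finSumFinEquiv (m := 2) (n := 2)).symm (finSumFinEquiv (m := 2) (n := 2)).symm
      (g : Matrix (Fin 4) (Fin 4) F)).toBlocks₂₁ = 0) := by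
  set ρ := reindexRingEquiv F (finSumFinEquiv (m := 2) (n := 2)).symm
  have hρ : ∀ M, ρ (reindex finSumFinEquiv finSumFinEquiv M) = M := fun M => by
    simp [ρ, coe_reindexRingEquiv]
  change (ρ (g : Matrix (Fin 4) (Fin 4) F)).toBlocks₂₁ = 0
  apply toBlocks₂₁_eq_zero_of_conj_of_commute (b := B)
  · rw [mul_assoc, Units.inv_mul_eq_iff_eq_mul] at hconj
    rw [← hρ (fromBlocks η 1 0 η), ← hβ₁, ← hρ (fromBlocks η B 0 η), ← map_mul, ← map_mul, hconj]
  · rw [← hρ (fromBlocks η 0 0 η), ← hβ₂]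
    exact Commute.map hcent ρ

/-- Let `η ∈ M₂(F)` have irreducible characteristic polynomial,
`β₁ = [[η, 1],[0, η]]` and `β₂ = diag(η, η)` in `M₄(F)`.  If `g ∈ GL₄(F)` centralizes `β₂`
and `g⁻¹ β₁ g = [[η, B],[0, η]]` for some `B ∈ M₂(F)`, then `g` is block upper-triangular,
i.e. its lower-left `2×2` block vanishes. -/
theorem stmt6 (F : Type*) [Field F]
    (η : Matrix (Fin 2) (Fin 2) F) (hη : Irreducible η.charpoly)
    (β₁ β₂ : Matrix (Fin 4) (Fin 4) F)
    (hβ₁ : β₁ = Matrix.reindex finSumFinEquiv finSumFinEquiv (Matrix.fromBlocks η 1 0 η))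
    (hβ₂ : β₂ = Matrix.reindex finSumFinEquiv finSumFinEquiv (Matrix.fromBlocks η 0 0 η))
    (g : GL (Fin 4) F)
    (hcent : (g : Matrix (Fin 4) (Fin 4) F) * β₂ = β₂ * (g : Matrix (Fin 4) (Fin 4) F))
    (B : Matrix (Fin 2) (Fin 2) F)
    (hconj : (g⁻¹ : GL (Fin 4) F) * β₁ * (g : Matrix (Fin 4) (Fin 4) F) =
      Matrix.reindex finSumFinEquiv finSumFinEquiv (Matrix.fromBlocks η B 0 η)) :
    ((Matrix.reindex (finSumFinEquiv (m := 2) (n := 2)).symm (finSumFinEquiv (m := 2) (n := 2)).symm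
      (g : Matrix (Fin 4) (Fin 4) F)).toBlocks₂₁ = 0) :=
  stmt6_general F η β₁ β₂ hβ₁ hβ₂ g hcent B hconj
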